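/- Let x* ∈ ri Σ. There exists C > 0 (one may take C = 1/min_i x*_i) such that for all x ∈ ri Σ, all y ∈ Σ, and all ε ∈ [0,1): e^{d_H}((1-ε)x + εy, x*) ≤ e^{d_H}(x, x*)(1 + (ε/(1-ε)) C), and consequently d_H((1-ε)x + εy, x*) ≤ d_H(x, x*) + log(1 + Cε/(1-ε)). -/

import Mathlib

open Finset

/-- Exponentiated Hilbert projective metric on the interior of the simplex. -/
noncomputable def eDH {n : ℕ} (x y : Fin n → ℝ) : ℝ :=
  (⨆ i, x i / y i) / (⨅ j, x j / y j)

/-!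
Writing `z = (1-ε)x + εy`, each ratio `z_i / x*_i` is `(1-ε) x_i / x*_i + ε y_i / x*_i` with
`0 ≤ y_i / x*_i ≤ 1 / min x* = C`. Hence `max_i z_i / x*_i ≤ (1-ε) M + ε C` and
`min_i z_i / x*_i ≥ (1-ε) m`, where `M, m` are the extreme ratios of `x`. Since `x` and `x*` both
sum to `1`, some `x_i ≥ x*_i`, so `M ≥ 1` and `(1-ε) M + ε C ≤ (1-ε) M (1 + (ε/(1-ε)) C)`.
-/

section FiniteRatios

variable {ι : Type*} [Finite ι] [Nonempty ι]

theorem Finite.ciInf_pos {f : ι → ℝ} (hf : ∀ i, 0 < f i) : 0 < ⨅ i, f i := by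
  obtain ⟨i, hi⟩ := exists_eq_ciInf_of_finite (f := f)
  exact hi ▸ hf i

theorem Finite.ciSup_pos {f : ι → ℝ} (hf : ∀ i, 0 < f i) : 0 < ⨆ i, f i := by
  obtain ⟨i, hi⟩ := exists_eq_ciSup_of_finite (f := f)
  exact hi ▸ hf i

theorem one_le_ciSup_div_of_sum_le [Fintype ι] {x w : ι → ℝ} (hw : ∀ i, 0 < w i)
    (hsum : ∑ i, w i ≤ ∑ i, x i) : 1 ≤ ⨆ i, x i / w i := by
  obtain ⟨i, -, hi⟩ := exists_le_of_sum_le univ_nonempty hsum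
  exact ((one_le_div (hw i)).mpr hi).trans
    (le_ciSup (Set.finite_range fun i => x i / w i).bddAbove i)

theorem div_le_inv_ciInf_of_sum_le_one [Fintype ι] {y w : ι → ℝ} (hw : ∀ i, 0 < w i)
    (hy : ∀ i, 0 ≤ y i) (hsum : ∑ i, y i ≤ 1) (i : ι) : y i / w i ≤ (⨅ i, w i)⁻¹ := by
  have hyi : y i ≤ 1 := (single_le_sum (fun j _ => hy j) (mem_univ i)).trans hsum
  rw [← one_div]
  exact div_le_div₀ zero_le_one hyi (Finite.ciInf_pos hw)
    (ciInf_le (Set.finite_range w).bddBelow i)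

end FiniteRatios

section HilbertMetric

variable {n : ℕ} [Nonempty (Fin n)]

theorem eDH_pos {x xs : Fin n → ℝ} (hx : ∀ i, 0 < x i) (hxs : ∀ i, 0 < xs i) :
    0 < eDH x xs :=
  div_pos (Finite.ciSup_pos fun i => div_pos (hx i) (hxs i))
    (Finite.ciInf_pos fun i => div_pos (hx i) (hxs i))

theorem eDH_smul_add_smul_le {x y xs : Fin n → ℝ} {C ε : ℝ} (hxs : ∀ i, 0 < xs i)
    (hx : ∀ i, 0 < x i) (hy : ∀ i, 0 ≤ y i) (hM : 1 ≤ ⨆ i, x i / xs i)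
    (hyC : ∀ i, y i / xs i ≤ C) (hε : 0 ≤ ε) (hε1 : ε < 1) :
    eDH ((1 - ε) • x + ε • y) xs ≤ eDH x xs * (1 + (ε / (1 - ε)) * C) := by
  set M := ⨆ i, x i / xs i
  set m := ⨅ i, x i / xs i
  have h1ε : 0 < 1 - ε := by linarith
  have hm : 0 < m := Finite.ciInf_pos fun i => div_pos (hx i) (hxs i)
  have hratio : ∀ i,
      ((1 - ε) • x + ε • y) i / xs i = (1 - ε) * (x i / xs i) + ε * (y i / xs i) := by
    intro i
    simp only [Pi.add_apply, Pi.smul_apply, smul_eq_mul]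
    ring
  have hsup : (⨆ i, ((1 - ε) • x + ε • y) i / xs i) ≤ (1 - ε) * M + ε * C := by
    refine ciSup_le fun i => ?_
    rw [hratio]
    have := le_ciSup (Set.finite_range fun i => x i / xs i).bddAbove i
    gcongr
    exact hyC i
  have hinf : (1 - ε) * m ≤ ⨅ i, ((1 - ε) • x + ε • y) i / xs i := by
    refine le_ciInf fun i => ?_
    rw [hratio]
    have := ciInf_le (Set.finite_range fun i => x i / xs i).bddBelow i
    have := div_nonneg (hy i) (hxs i).le
    nlinarith
  have hC : 0 ≤ C := (div_nonneg (hy (Classical.arbitrary _)) (hxs _).le).trans (hyC _)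
  calc eDH ((1 - ε) • x + ε • y) xs ≤ ((1 - ε) * M + ε * C) / ((1 - ε) * m) :=
        div_le_div₀ (by nlinarith) hsup (by positivity) hinf
    _ ≤ M / m * (1 + (ε / (1 - ε)) * C) := by
        rw [div_le_iff₀ (by positivity)]
        field_simp
        nlinarith [mul_nonneg hε hC]
    _ = eDH x xs * (1 + (ε / (1 - ε)) * C) := rfl

end HilbertMetric

/-- For `x* ∈ ri Σ` the constant `C = 1/min_i x*_i > 0` satisfies: for all
`x ∈ ri Σ`, `y ∈ Σ` and `ε ∈ [0,1)`,
`e^{d_H}((1-ε)x + εy, x*) ≤ e^{d_H}(x, x*)(1 + (ε/(1-ε))C)` and consequently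
`d_H((1-ε)x + εy, x*) ≤ d_H(x, x*) + log(1 + Cε/(1-ε))`. -/
theorem stmt18 (n : ℕ) (hn : 2 ≤ n)
    (xs : Fin n → ℝ) (hxspos : ∀ i, 0 < xs i) (hxssum : ∑ i, xs i = 1) :
    0 < (⨅ i, xs i)⁻¹ ∧
    ∀ x : Fin n → ℝ, (∀ i, 0 < x i) → ∑ i, x i = 1 →
      ∀ y : Fin n → ℝ, (∀ i, 0 ≤ y i) → ∑ i, y i = 1 →
      ∀ ε : ℝ, 0 ≤ ε → ε < 1 →
        (eDH ((1 - ε) • x + ε • y) xs ≤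
          eDH x xs * (1 + (ε / (1 - ε)) * (⨅ i, xs i)⁻¹)) ∧
        (Real.log (eDH ((1 - ε) • x + ε • y) xs) ≤
          Real.log (eDH x xs) +
            Real.log (1 + (⨅ i, xs i)⁻¹ * ε / (1 - ε))) := by
  have : Nonempty (Fin n) := ⟨⟨0, by omega⟩⟩
  set C := (⨅ i, xs i)⁻¹
  have hC : 0 < C := inv_pos.mpr (Finite.ciInf_pos hxspos)
  refine ⟨hC, fun x hx hxsum y hy hysum ε hε hε1 => ?_⟩
  have hbound := eDH_smul_add_smul_le hxspos hx hy
    (one_le_ciSup_div_of_sum_le hxspos (by rw [hxsum, hxssum]))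
    (div_le_inv_ciInf_of_sum_le_one hxspos hy hysum.le) hε hε1
  refine ⟨hbound, ?_⟩
  have hz : ∀ i, 0 < ((1 - ε) • x + ε • y) i := fun i => by
    simp only [Pi.add_apply, Pi.smul_apply, smul_eq_mul]
    nlinarith [hx i, hy i]
  have hfactor : 0 < 1 + (ε / (1 - ε)) * C := by
    have : 0 < 1 - ε := by linarith
    positivity
  calc Real.log (eDH ((1 - ε) • x + ε • y) xs)
      ≤ Real.log (eDH x xs * (1 + (ε / (1 - ε)) * C)) :=
        Real.log_le_log (eDH_pos hz hxspos) hbound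
    _ = Real.log (eDH x xs) + Real.log (1 + C * ε / (1 - ε)) := by
        rw [Real.log_mul (eDH_pos hx hxspos).ne' hfactor.ne', mul_comm, mul_div_assoc]
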